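/- Let 𝕍 = V ⊕ V* = E ⊕ F be a Lagrangian splitting with bivector π. For ε ∈ ∧²E, let F_ε = A^{-ε}(F) be the image of F under the orthogonal transformation A^{-ε} fixing E pointwise (generated by ε via the Clifford/Poisson identification ∧²𝕍 ≅ 𝔬(𝕍)). Then F_ε is a Lagrangian complement to E, and the bivector π_ε of the splitting E ⊕ F_ε is π_ε = π + pr_V(ε), where pr_V: ∧E → ∧V is the algebra morphism extending the projection E → V. -/

import Mathlib

/-!
The gauge transformation `A = A^{-ε}` is `w ↦ w + ι(w)ε`. Since `ε ∈ ∧²E` and `E` is isotropic,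
`A - 1` maps `𝕍` into `E` and vanishes on `E`, so `A` is unipotent (hence bijective) and fixes `E`
pointwise, and the identity `ι(u)ι(w)ε = -ι(w)ι(u)ε` makes `A` an isometry. Hence `A` carries the
Lagrangian complement `F` of `E = A(E)` to a Lagrangian complement `A(F)`, and the projection onto
`E` along `A(F)` is `p - (A - 1)`. Contracting `π_ε - π - pr_V(ε)` with any `α ∈ V*` therefore
gives `0`, and a bivector all of whose contractions vanish is zero by the Euler identity
`∑ eᵢ ∧ ι(eᵢ*)x = n x` on `∧ⁿV`.
-/

set_option synthInstance.maxHeartbeats 1000000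
set_option maxHeartbeats 1000000

open ExteriorAlgebra CliffordAlgebra Module

/-- The pairing bilinear form on `𝕍 = V ⊕ V*`. -/
noncomputable def vPairing (K V : Type*) [Field K] [AddCommGroup V] [Module K V] :
    LinearMap.BilinForm K (V × Module.Dual K V) :=
  LinearMap.mk₂ K (fun w u => w.2 u.1 + u.2 w.1)
    (fun w w' u => by simp; ring)
    (fun c w u => by simp; ring)
    (fun w u u' => by simp; ring)
    (fun c w u => by simp; ring)

/-- The algebra morphism `pr_V : ∧ 𝕍 → ∧ V` extending the projection `𝕍 → V`. -/
noncomputable def prExt (K V : Type*) [Field K] [AddCommGroup V] [Module K V] :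
    ExteriorAlgebra K (V × Module.Dual K V) →ₐ[K] ExteriorAlgebra K V :=
  ExteriorAlgebra.lift K
    ⟨(ExteriorAlgebra.ι K).comp (LinearMap.fst K V (Module.Dual K V)),
      fun _ => ExteriorAlgebra.ι_sq_zero _⟩

namespace ExteriorAlgebra

variable {R M N : Type*} [CommRing R] [AddCommGroup M] [Module R M] [AddCommGroup N] [Module R N]

theorem contractLeft_ι_mul_ι (d : Module.Dual R M) (x y : M) :
    contractLeft d (ι R x * ι R y) = d x • ι R y - d y • ι R x := by
  rw [contractLeft_ι_mul, contractLeft_ι, ← Algebra.commutes, ← Algebra.smul_def]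

theorem contractLeft_map (f : M →ₗ[R] N) (d : Module.Dual R N) (x : ExteriorAlgebra R M) :
    contractLeft d (map f x) = map f (contractLeft (d ∘ₗ f) x) := by
  induction x using CliffordAlgebra.left_induction with
  | algebraMap r => simp only [AlgHom.commutes, contractLeft_algebraMap, map_zero]
  | add x y hx hy => simp only [map_add, hx, hy]
  | ι_mul x m hx =>
    simp only [map_mul, map_apply_ι, contractLeft_ι_mul, hx, map_sub, map_smul,
      LinearMap.comp_apply]

theorem map_mem_exteriorPower (f : M →ₗ[R] N) {n : ℕ} {x : ExteriorAlgebra R M}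
    (hx : x ∈ ⋀[R]^n M) : map f x ∈ ⋀[R]^n N := by
  have hle : (⋀[R]^n M).map (map f).toLinearMap ≤ ⋀[R]^n N := by
    rw [Submodule.map_pow, ι_range_map_map]
    exact pow_le_pow_left' (LinearMap.map_le_range) n
  exact hle ⟨x, hx, rfl⟩

theorem contractLeft_mem_map_ι {S : Submodule R M} {x : ExteriorAlgebra R M}
    (hx : x ∈ S.map (ι R) ^ 2) (d : Module.Dual R M) : contractLeft d x ∈ S.map (ι R) := by
  rw [pow_two] at hx
  refine Submodule.mul_induction_on hx ?_ ?_
  · rintro _ ⟨u, hu, rfl⟩ _ ⟨v, hv, rfl⟩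
    rw [contractLeft_ι_mul_ι]
    exact sub_mem (Submodule.smul_mem _ _ ⟨v, hv, rfl⟩) (Submodule.smul_mem _ _ ⟨u, hu, rfl⟩)
  · intro _ _ ha hb
    rw [map_add]
    exact add_mem ha hb

theorem contractLeft_eq_zero_of_mem {S : Submodule R M} {x : ExteriorAlgebra R M}
    (hx : x ∈ S.map (ι R) ^ 2) {d : Module.Dual R M} (hd : ∀ s ∈ S, d s = 0) :
    contractLeft d x = 0 := by
  rw [pow_two] at hx
  refine Submodule.mul_induction_on hx ?_ ?_
  · rintro _ ⟨u, hu, rfl⟩ _ ⟨v, hv, rfl⟩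
    rw [contractLeft_ι_mul_ι, hd u hu, hd v hv, zero_smul, zero_smul, sub_zero]
  · intro _ _ ha hb
    rw [map_add, ha, hb, add_zero]

theorem sum_ι_mul_contractLeft_coord {I : Type*} [Fintype I] (b : Basis I R M) {n : ℕ}
    {x : ExteriorAlgebra R M} (hx : x ∈ ⋀[R]^n M) :
    ∑ i, ι R (b i) * contractLeft (b.coord i) x = n • x := by
  induction hx using Submodule.pow_induction_on_left' with
  | algebraMap r => simp only [contractLeft_algebraMap, mul_zero, Finset.sum_const_zero, zero_smul]
  | add x y i _ _ hx hy => simp only [map_add, mul_add, Finset.sum_add_distrib, hx, hy, smul_add]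
  | mem_mul m hm i x _ ih =>
    obtain ⟨u, rfl⟩ := hm
    have hu : ∑ i, b.coord i u • ι R (b i) = ι R u := by
      simp only [Basis.coord_apply, ← map_smul, ← map_sum, b.sum_repr]
    have hterm : ∀ j, ι R (b j) * contractLeft (b.coord j) (ι R u * x)
        = (b.coord j u • ι R (b j)) * x + ι R u * (ι R (b j) * contractLeft (b.coord j) x) := by
      intro j
      rw [contractLeft_ι_mul, mul_sub, mul_smul_comm, smul_mul_assoc, ← mul_assoc, ← mul_assoc,
        eq_neg_of_add_eq_zero_left (ι_add_mul_swap (b j) u), neg_mul, sub_neg_eq_add]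
    calc ∑ j, ι R (b j) * contractLeft (b.coord j) (ι R u * x)
        = (∑ j, b.coord j u • ι R (b j)) * x
          + ι R u * ∑ j, ι R (b j) * contractLeft (b.coord j) x := by
          simp only [hterm, Finset.sum_add_distrib, Finset.sum_mul, Finset.mul_sum]
      _ = (i + 1) • (ι R u * x) := by rw [hu, ih, mul_smul_comm, succ_nsmul']

theorem eq_zero_of_contractLeft_eq_zero {K V : Type*} [Field K] [CharZero K] [AddCommGroup V]
    [Module K V] [FiniteDimensional K V] {n : ℕ} (hn : n ≠ 0) {x : ExteriorAlgebra K V}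
    (hx : x ∈ ⋀[K]^n V) (h : ∀ α : Module.Dual K V, contractLeft α x = 0) : x = 0 := by
  have hnx := sum_ι_mul_contractLeft_coord (Module.finBasis K V) hx
  simp only [h, mul_zero, Finset.sum_const_zero] at hnx
  rw [← Nat.cast_smul_eq_nsmul K] at hnx
  exact (smul_eq_zero.mp hnx.symm).resolve_left (Nat.cast_ne_zero.mpr hn)

end ExteriorAlgebra

namespace LinearMap

variable {R M : Type*} [CommRing R] [AddCommGroup M] [Module R M] {E F : Submodule R M}
  {A : M →ₗ[R] M}

theorem bijective_of_fixes_of_sub_mem (hfix : ∀ w ∈ E, A w = w) (hsub : ∀ w, A w - w ∈ E) :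
    Function.Bijective A := by
  have hnil : IsNilpotent (A - 1) := ⟨2, LinearMap.ext fun w => by
    simp [pow_two, hfix _ (hsub w)]⟩
  rw [← Module.End.isUnit_iff, ← sub_add_cancel A 1]
  exact hnil.isUnit_add_one

theorem isCompl_map_of_fixes_of_sub_mem (hEF : IsCompl E F) (hfix : ∀ w ∈ E, A w = w)
    (hsub : ∀ w, A w - w ∈ E) : IsCompl E (F.map A) := by
  have hE : E.map A = E := by
    ext w
    refine ⟨?_, fun hw => ⟨w, hw, hfix w hw⟩⟩
    rintro ⟨v, hv, rfl⟩
    rwa [hfix v hv]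
  rw [← hE]
  exact (Submodule.orderIsoMapComapOfBijective A
    (bijective_of_fixes_of_sub_mem hfix hsub)).isCompl hEF

theorem apply_eq_sub_of_isCompl_map (hEF : IsCompl E F) (hfix : ∀ w ∈ E, A w = w)
    (hsub : ∀ w, A w - w ∈ E) {p q : M →ₗ[R] M} (hpE : ∀ w ∈ E, p w = w)
    (hpF : ∀ w ∈ F, p w = 0) (hqE : ∀ w ∈ E, q w = w) (hqF : ∀ w ∈ F.map A, q w = 0) (w : M) :
    q w = p w - (A w - w) := by
  have hw : w ∈ E ⊔ F := by rw [hEF.sup_eq_top]; trivial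
  obtain ⟨e, he, f, hf, rfl⟩ := Submodule.mem_sup.mp hw
  have hsplit : e + f = (e - (A f - f)) + A f := by abel
  rw [hsplit, map_add, hqE _ (sub_mem he (hsub f)), hqF _ ⟨f, hf, rfl⟩, ← hsplit, map_add,
    map_add, hpE e he, hpF f hf, hfix e he]
  abel

end LinearMap

namespace LinearMap.BilinForm

variable {R M : Type*} [CommRing R] [AddCommGroup M] [Module R M] {A : M →ₗ[R] M}

theorem orthogonal_map_of_isometry {B : LinearMap.BilinForm R M} (hA : Function.Surjective A)
    (hiso : ∀ u w, B (A u) (A w) = B u w) (F : Submodule R M) :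
    B.orthogonal (F.map A) = (B.orthogonal F).map A := by
  ext x
  obtain ⟨y, rfl⟩ := hA x
  constructor
  · intro hy
    refine ⟨y, mem_orthogonal_iff.mpr fun f hf => ?_, rfl⟩
    rw [← hiso]
    exact mem_orthogonal_iff.mp hy _ ⟨f, hf, rfl⟩
  · rintro ⟨z, hz, hzy⟩
    refine mem_orthogonal_iff.mpr ?_
    rintro _ ⟨f, hf, rfl⟩
    rw [← hzy, hiso]
    exact mem_orthogonal_iff.mp hz f hf

end LinearMap.BilinForm

section GaugeTransform

variable {R M : Type*} [CommRing R] [AddCommGroup M] [Module R M]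

/-- `A` is the transformation `A^{-ε} : w ↦ w + ι(w)ε` of the paper. -/
def IsGaugeTransform (B : LinearMap.BilinForm R M) (ε : ExteriorAlgebra R M)
    (A : M →ₗ[R] M) : Prop :=
  ∀ w, ι R (A w - w) = contractLeft (B w) ε

variable {B : LinearMap.BilinForm R M} {E : Submodule R M} {ε : ExteriorAlgebra R M}
  {A : M →ₗ[R] M}

namespace IsGaugeTransform

theorem sub_mem (hA : IsGaugeTransform B ε A) (hε : ε ∈ E.map (ι R) ^ 2) (w : M) :
    A w - w ∈ E := by
  obtain ⟨e, he, hee⟩ : ι R (A w - w) ∈ E.map (ι R) := hA w ▸ contractLeft_mem_map_ι hε _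
  rwa [← (ι_inj R _ _).mp hee]

theorem apply_eq_self (hA : IsGaugeTransform B ε A) (hE : E ≤ B.orthogonal E)
    (hε : ε ∈ E.map (ι R) ^ 2) {w : M} (hw : w ∈ E) : A w = w := by
  have h := hA w
  rwa [contractLeft_eq_zero_of_mem hε fun s hs =>
    LinearMap.BilinForm.mem_orthogonal_iff.mp (hE hs) w hw, ι_eq_zero_iff, sub_eq_zero] at h

theorem add_eq_zero (hA : IsGaugeTransform B ε A) (u w : M) :
    B w (A u - u) + B u (A w - w) = 0 := by
  have h := contractLeft_comm (d := B w) (d' := B u) ε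
  rw [← hA u, ← hA w, contractLeft_ι, contractLeft_ι, ← map_neg, ← sub_eq_zero, ← map_sub,
    sub_neg_eq_add] at h
  exact (algebraMap_inj M _ 0).mp (h.trans (map_zero _).symm)

theorem isometry (hA : IsGaugeTransform B ε A) (hB : B.IsSymm) (hE : E ≤ B.orthogonal E)
    (hε : ε ∈ E.map (ι R) ^ 2) (u w : M) : B (A u) (A w) = B u w := by
  set nu := A u - u
  set nw := A w - w
  calc B (A u) (A w) = B (u + nu) (w + nw) := by simp only [nu, nw, add_sub_cancel]
    _ = B u w + (B w nu + B u nw) + B nu nw := by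
      simp only [map_add, LinearMap.add_apply, hB.eq nu w]
      ring
    _ = B u w := by
      rw [hA.add_eq_zero, LinearMap.BilinForm.mem_orthogonal_iff.mp (hE (hA.sub_mem hε w)) nu
        (hA.sub_mem hε u), add_zero, add_zero]

end IsGaugeTransform

end GaugeTransform

section PairingSpace

variable {K V : Type*} [Field K] [AddCommGroup V] [Module K V]

theorem vPairing_isSymm : (vPairing K V).IsSymm :=
  ⟨fun w u => add_comm (w.2 u.1) (u.2 w.1)⟩

theorem vPairing_zero_left (α : Module.Dual K V) :
    vPairing K V ((0 : V), α) = α ∘ₗ LinearMap.fst K V (Module.Dual K V) := by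
  ext u
  · simp [vPairing]
  · simp [vPairing]

theorem prExt_eq_map : prExt K V = map (LinearMap.fst K V (Module.Dual K V)) :=
  ExteriorAlgebra.hom_ext (LinearMap.ext fun w => by simp [prExt])

theorem contractLeft_prExt (α : Module.Dual K V) (x : ExteriorAlgebra K (V × Module.Dual K V)) :
    contractLeft α (prExt K V x) = prExt K V (contractLeft (vPairing K V ((0 : V), α)) x) := by
  rw [prExt_eq_map, vPairing_zero_left, contractLeft_map]

end PairingSpace

/-- let `𝕍 = E ⊕ F` be a Lagrangian splitting with bivector `π`, and let
`ε ∈ ∧²E`. The gauge transformation `A = A^{-ε}` (so `A(w) - w = ι(w)ε`, contraction via the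
pairing form) produces `F_ε = A(F)`, a Lagrangian complement to `E`, and the bivector of the
splitting `E ⊕ F_ε` is `π_ε = π + pr_V(ε)`. -/
theorem pure_spinors_stmt14 {K V : Type*} [Field K] [CharZero K] [AddCommGroup V] [Module K V]
    [FiniteDimensional K V]
    (E F : Submodule K (V × Module.Dual K V))
    (hElag : E = (vPairing K V).orthogonal E)
    (hFlag : F = (vPairing K V).orthogonal F)
    (hcompl : IsCompl E F)
    (p : (V × Module.Dual K V) →ₗ[K] (V × Module.Dual K V))
    (hpE : ∀ w ∈ E, p w = w) (hpF : ∀ w ∈ F, p w = 0)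
    (π : ExteriorAlgebra K V) (hπdeg : π ∈ (⋀[K]^2 V))
    (hπ : ∀ α : Module.Dual K V,
      CliffordAlgebra.contractLeft α π = ExteriorAlgebra.ι K (-(p ((0 : V), α)).1))
    (ε : ExteriorAlgebra K (V × Module.Dual K V))
    (hε : ε ∈ (E.map (ExteriorAlgebra.ι K (M := V × Module.Dual K V))) ^ 2)
    (A : (V × Module.Dual K V) →ₗ[K] (V × Module.Dual K V))
    (hA : ∀ w : V × Module.Dual K V,
      ExteriorAlgebra.ι K (A w - w) = CliffordAlgebra.contractLeft (vPairing K V w) ε) :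
    (F.map A = (vPairing K V).orthogonal (F.map A)) ∧
    IsCompl E (F.map A) ∧
    (∀ pε : (V × Module.Dual K V) →ₗ[K] (V × Module.Dual K V),
      (∀ w ∈ E, pε w = w) → (∀ w ∈ F.map A, pε w = 0) →
      ∀ πε : ExteriorAlgebra K V, πε ∈ (⋀[K]^2 V) →
        (∀ α : Module.Dual K V,
          CliffordAlgebra.contractLeft α πε = ExteriorAlgebra.ι K (-(pε ((0 : V), α)).1)) →
        πε = π + prExt K V ε) := by
  have hgauge : IsGaugeTransform (vPairing K V) ε A := hA
  have hsub := hgauge.sub_mem hε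
  have hfix : ∀ w ∈ E, A w = w := fun w hw => hgauge.apply_eq_self hElag.le hε hw
  have hA_bij := LinearMap.bijective_of_fixes_of_sub_mem hfix hsub
  refine ⟨?_, LinearMap.isCompl_map_of_fixes_of_sub_mem hcompl hfix hsub, ?_⟩
  · rw [(vPairing K V).orthogonal_map_of_isometry hA_bij.surjective
      (hgauge.isometry vPairing_isSymm hElag.le hε), ← hFlag]
  intro pε hpεE hpεF πε hπεdeg hπε
  have hprε : prExt K V ε ∈ ⋀[K]^2 V := prExt_eq_map (K := K) (V := V) ▸
    map_mem_exteriorPower _ (pow_le_pow_left' LinearMap.map_le_range 2 hε)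
  refine sub_eq_zero.mp (eq_zero_of_contractLeft_eq_zero two_ne_zero
    (sub_mem hπεdeg (add_mem hπdeg hprε)) fun α => ?_)
  rw [map_sub, map_add, hπε, hπ, contractLeft_prExt, ← hA, prExt_eq_map,
    ExteriorAlgebra.map_apply_ι,
    LinearMap.apply_eq_sub_of_isCompl_map hcompl hfix hsub hpE hpF hpεE hpεF]
  simp only [Prod.fst_sub, LinearMap.fst_apply, map_neg, map_sub]
  abel
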